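/- Let G be a Cayley graph of (Z/2Z)^n with generating set S. If there exist distinct elements e₁, …, e_k ∈ S with e₁ + ⋯ + e_k = 0 and k ≡ 2 or 3 (mod 4), and S is a Sidon set, then G admits no orthogonal signing. -/

import Mathlib

open scoped Classical

def cayley (n : ℕ) (S : Set (Fin n → ZMod 2)) : SimpleGraph (Fin n → ZMod 2) where
  Adj x y := x ≠ y ∧ x + y ∈ S
  symm := by
    constructor
    intro x y h
    exact ⟨h.1.symm, by rw [add_comm]; exact h.2⟩
  loopless := by
    constructor
    intro x h
    exact h.1 rfl

/-- An orthogonal signing of a graph `G` on a finite vertex set: a symmetric matrix with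
entries `±1` on edges and `0` elsewhere, whose distinct rows are orthogonal. -/
def IsOrthSigning {V : Type*} [Fintype V] (G : SimpleGraph V) (M : Matrix V V ℝ) : Prop :=
  M.IsSymm ∧ (∀ u v, G.Adj u v → M u v = 1 ∨ M u v = -1) ∧
    (∀ u v, ¬ G.Adj u v → M u v = 0) ∧
    (∀ u v, u ≠ v → ∑ w, M u w * M v w = 0)

/-!
Let `P` be the product of the entries of `M` along the closed walk from `0` with steps
`e₁, …, e_k`; it is nonzero since every step is an edge. As `M` is symmetric and each step is its
own inverse, walking backwards shows that reversing the order of the steps leaves `P` unchanged.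
On the other hand, for distinct `s, t ∈ S` the Sidon property makes `x + s` and `x + t` the only
common neighbours of `x` and `x + s + t`, so orthogonality of these two rows says that swapping
two consecutive steps negates `P`. Reversing `k` distinct steps takes `k.choose 2` such swaps,
an odd number when `k ≡ 2, 3 (mod 4)`, hence `P = -P`.
-/

def IsSidon {V : Type*} [Add V] (S : Set V) : Prop :=
  ∀ s₁ ∈ S, ∀ s₂ ∈ S, ∀ s₃ ∈ S, ∀ s₄ ∈ S,
    s₁ ≠ s₂ → s₃ ≠ s₄ → s₁ + s₂ = s₃ + s₄ → ({s₁, s₂} : Set V) = {s₃, s₄}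

theorem Nat.odd_choose_two_of_mod_four {k : ℕ} (hk : k % 4 = 2 ∨ k % 4 = 3) :
    Odd (k.choose 2) := by
  have hdouble : 2 * k.choose 2 = k * (k - 1) := by
    rw [Nat.choose_two_right]
    exact Nat.mul_div_cancel' (Nat.even_mul_pred_self k).two_dvd
  have hmod : k * (k - 1) % 4 = 2 := by
    rw [Nat.mul_mod]
    rcases hk with hk | hk
    · rw [hk, show (k - 1) % 4 = 1 by omega]
    · rw [hk, show (k - 1) % 4 = 2 by omega]
  rw [Nat.odd_iff]
  omega

section OrthSigning

variable {V : Type*} [Fintype V] {G : SimpleGraph V} {M : Matrix V V ℝ}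

theorem IsOrthSigning.ne_zero_of_adj (hM : IsOrthSigning G M) {u v : V} (h : G.Adj u v) :
    M u v ≠ 0 := by
  rcases hM.2.1 u v h with h | h <;> norm_num [h]

/-- Orthogonality of the rows `u`, `v` only sees their common neighbours. -/
theorem IsOrthSigning.mul_add_mul_eq_zero (hM : IsOrthSigning G M) {u v a b : V}
    (huv : u ≠ v) (hab : a ≠ b) (hcommon : ∀ w, G.Adj u w → G.Adj v w → w = a ∨ w = b) :
    M u a * M a v + M u b * M b v = 0 := by
  have horth := hM.2.2.2 u v huv
  rw [Finset.sum_eq_add_of_mem a b (Finset.mem_univ _) (Finset.mem_univ _) hab ?_,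
    hM.1.apply a v, hM.1.apply b v] at horth
  · exact horth
  rintro w - ⟨hwa, hwb⟩
  by_cases hu : G.Adj u w
  · by_cases hv : G.Adj v w
    · exact ((hcommon w hu hv).elim hwa hwb).elim
    · rw [hM.2.2.1 v w hv, mul_zero]
  · rw [hM.2.2.1 u w hu, zero_mul]

end OrthSigning

section Walk

variable {V R : Type*}

def walkProd [Add V] [Mul R] [One R] (M : Matrix V V R) : V → List V → R
  | _, [] => 1
  | x, s :: L => M x (x + s) * walkProd M (x + s) L

@[simp]
theorem walkProd_nil [Add V] [Mul R] [One R] (M : Matrix V V R) (x : V) : walkProd M x [] = 1 :=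
  rfl

@[simp]
theorem walkProd_cons [Add V] [Mul R] [One R] (M : Matrix V V R) (x s : V) (L : List V) :
    walkProd M x (s :: L) = M x (x + s) * walkProd M (x + s) L :=
  rfl

theorem walkProd_append [AddMonoid V] [Monoid R] (M : Matrix V V R) (x : V) (L₁ L₂ : List V) :
    walkProd M x (L₁ ++ L₂) = walkProd M x L₁ * walkProd M (x + L₁.sum) L₂ := by
  induction L₁ generalizing x with
  | nil => simp
  | cons s L ih => simp [ih, add_assoc, mul_assoc]

theorem walkProd_ne_zero [Add V] [MonoidWithZero R] [NoZeroDivisors R] [Nontrivial R]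
    {M : Matrix V V R} {L : List V} (hM : ∀ y, ∀ s ∈ L, M y (y + s) ≠ 0) (x : V) :
    walkProd M x L ≠ 0 := by
  induction L generalizing x with
  | nil => simp
  | cons s L ih =>
    exact mul_ne_zero (hM x s (by simp)) (ih (fun y t ht => hM y t (by simp [ht])) _)

theorem walkProd_add_sum_reverse [AddCommGroup V] [Module (ZMod 2) V] [CommMonoid R]
    {M : Matrix V V R} (hM : M.IsSymm) (x : V) (L : List V) :
    walkProd M (x + L.sum) L.reverse = walkProd M x L := by
  induction L generalizing x with
  | nil => simp
  | cons s L ih =>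
    have hend : x + (s :: L).sum + L.reverse.sum = x + s := by
      rw [List.sum_reverse, List.sum_cons, add_assoc, add_assoc, ZModModule.add_self, add_zero]
    rw [List.reverse_cons, walkProd_append, hend, walkProd_cons, walkProd_nil, add_assoc x s s,
      ZModModule.add_self, add_zero, hM.apply, List.sum_cons, ← add_assoc, ih, mul_one, mul_comm]
    rfl

theorem ZModModule.add_add_ne_self [AddCommGroup V] [Module (ZMod 2) V] {s t : V} (hst : s ≠ t)
    (x : V) : x + s + t ≠ x := by
  rw [add_assoc, ne_eq, add_eq_left, ← ZModModule.sub_eq_add, sub_eq_zero]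
  exact hst

end Walk

section Cayley

variable {n : ℕ} {S : Set (Fin n → ZMod 2)}

theorem cayley_adj_add (h0 : (0 : Fin n → ZMod 2) ∉ S) {s : Fin n → ZMod 2} (hs : s ∈ S)
    (x : Fin n → ZMod 2) : (cayley n S).Adj x (x + s) := by
  refine ⟨fun h => h0 ?_, ?_⟩
  · rwa [left_eq_add.mp h] at hs
  · rwa [← add_assoc, ZModModule.add_self, zero_add]

theorem cayley_common_neighbor (hS : IsSidon S) {s t : Fin n → ZMod 2} (hs : s ∈ S) (ht : t ∈ S)
    (hst : s ≠ t) {x w : Fin n → ZMod 2} (hxw : (cayley n S).Adj x w)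
    (hyw : (cayley n S).Adj (x + s + t) w) : w = x + s ∨ w = x + t := by
  have hne : x + w ≠ x + s + t + w := fun h =>
    ZModModule.add_add_ne_self hst x (add_right_cancel h).symm
  have hsum : x + w + (x + s + t + w) = s + t := by
    rw [show x + s + t + w = x + w + (s + t) by abel, ← add_assoc, ZModModule.add_self, zero_add]
  have hmem : x + w ∈ ({s, t} : Set (Fin n → ZMod 2)) := by
    rw [← hS _ hxw.2 _ hyw.2 _ hs _ ht hne hst hsum]
    exact Set.mem_insert _ _
  have hsolve : ∀ u, x + w = u → w = x + u := by
    rintro u rfl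
    rw [← add_assoc, ZModModule.add_self, zero_add]
  exact hmem.imp (hsolve s) (hsolve t)

variable {M : Matrix (Fin n → ZMod 2) (Fin n → ZMod 2) ℝ}

theorem IsOrthSigning.walkProd_swap (hS : IsSidon S) (hM : IsOrthSigning (cayley n S) M)
    {s t : Fin n → ZMod 2} (hs : s ∈ S) (ht : t ∈ S) (hst : s ≠ t) (x : Fin n → ZMod 2)
    (L : List (Fin n → ZMod 2)) :
    walkProd M x (t :: s :: L) = -walkProd M x (s :: t :: L) := by
  have hxst : x + s ≠ x + t := fun h => hst (add_left_cancel h)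
  have := hM.mul_add_mul_eq_zero (ZModModule.add_add_ne_self hst x).symm hxst
    (fun w hxw hyw => cayley_common_neighbor hS hs ht hst hxw hyw)
  simp only [walkProd_cons, add_right_comm x t s, ← mul_assoc]
  linear_combination (walkProd M (x + s + t) L) * this

theorem IsOrthSigning.walkProd_append_singleton (hS : IsSidon S)
    (hM : IsOrthSigning (cayley n S) M) {s : Fin n → ZMod 2} (hs : s ∈ S) (x : Fin n → ZMod 2)
    (L : List (Fin n → ZMod 2)) (hL : ∀ t ∈ L, t ∈ S ∧ t ≠ s) :
    walkProd M x (L ++ [s]) = (-1) ^ L.length * walkProd M x (s :: L) := by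
  induction L generalizing x with
  | nil => simp
  | cons t L ih =>
    obtain ⟨ht, hts⟩ := hL t (by simp)
    calc walkProd M x (t :: L ++ [s]) = M x (x + t) * walkProd M (x + t) (L ++ [s]) := rfl
      _ = (-1) ^ L.length * walkProd M x (t :: s :: L) := by
        rw [ih (x + t) (fun u hu => hL u (by simp [hu])), walkProd_cons M x t, mul_left_comm]
      _ = (-1) ^ (t :: L).length * walkProd M x (s :: t :: L) := by
        rw [hM.walkProd_swap hS hs ht (Ne.symm hts), List.length_cons, pow_succ]
        ring

theorem IsOrthSigning.walkProd_reverse (hS : IsSidon S)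
    (hM : IsOrthSigning (cayley n S) M) (x : Fin n → ZMod 2) (L : List (Fin n → ZMod 2))
    (hnd : L.Nodup) (hL : ∀ t ∈ L, t ∈ S) :
    walkProd M x L.reverse = (-1) ^ L.length.choose 2 * walkProd M x L := by
  induction L generalizing x with
  | nil => simp
  | cons s L ih =>
    obtain ⟨hsL, hnd⟩ := List.nodup_cons.mp hnd
    rw [List.reverse_cons, hM.walkProd_append_singleton hS (hL s (by simp)) x L.reverse
        (fun t ht => ⟨hL t (by simp [List.mem_reverse.mp ht]),
          fun h => hsL (h ▸ List.mem_reverse.mp ht)⟩),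
      walkProd_cons, ih (x + s) hnd (fun t ht => hL t (by simp [ht])), List.length_reverse,
      List.length_cons, Nat.choose_succ_succ, Nat.choose_one_right, pow_add, walkProd_cons]
    ring

end Cayley

theorem stmt15 (n k : ℕ) (S : Set (Fin n → ZMod 2)) (h0 : (0 : Fin n → ZMod 2) ∉ S)
    (hSidon : ∀ s₁ ∈ S, ∀ s₂ ∈ S, ∀ s₃ ∈ S, ∀ s₄ ∈ S,
      s₁ ≠ s₂ → s₃ ≠ s₄ → s₁ + s₂ = s₃ + s₄ →
      ({s₁, s₂} : Set (Fin n → ZMod 2)) = {s₃, s₄})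
    (e : Fin k → (Fin n → ZMod 2)) (hinj : Function.Injective e)
    (heS : ∀ i, e i ∈ S) (hsum : ∑ i, e i = 0)
    (hmod : k % 4 = 2 ∨ k % 4 = 3) :
    ¬ ∃ M : Matrix (Fin n → ZMod 2) (Fin n → ZMod 2) ℝ, IsOrthSigning (cayley n S) M := by
  rintro ⟨M, hM⟩
  set L := List.ofFn e
  have hL : ∀ t ∈ L, t ∈ S := by simpa [L, List.mem_ofFn] using heS
  have hne : walkProd M 0 L ≠ 0 :=
    walkProd_ne_zero (fun y s hs => hM.ne_zero_of_adj (cayley_adj_add h0 (hL s hs) y)) 0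
  have hclosed := walkProd_add_sum_reverse hM.1 0 L
  rw [List.sum_ofFn, hsum, add_zero,
    hM.walkProd_reverse hSidon 0 L (List.nodup_ofFn.mpr hinj) hL, List.length_ofFn,
    (Nat.odd_choose_two_of_mod_four hmod).neg_one_pow] at hclosed
  exact hne (by linarith)
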